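/- arXiv:1707.08138 — 2 statements merged into one kernel-verified Lean document; each statement's English description precedes it below -/
import Mathlib

section
/- For all natural numbers n and m, the restricted Bell numbers satisfy (as an identity of rational numbers) B_{n+m,≤3} = ∑_{i=0}^{n} ∑_{j=⌈i/2⌉}^{min(m,2i)} ∑_{k} n!·m!·B_{n-i,≤3}·B_{m-j,≤3} / ( k!·(n-i)!·(m-j)!·((2i-j-k)/3)!·((2j-i-k)/3)!·2^{(i+j-2k)/3} ), where the inner sum runs over all integers k with 0 ≤ k ≤ min(i, j, 2i-j, 2j-i) and k ≡ -i-j (mod 3); note that the condition k ≡ -i-j (mod 3) guarantees that (2i-j-k)/3, (2j-i-k)/3 and (i+j-2k)/3 are nonnegative integers. -/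
/-- The restricted Bell number `B_{n,≤m}`: the number of partitions of an `n`-element set
into nonempty blocks each of size at most `m`. -/
noncomputable def restrictedBell (n m : ℕ) : ℕ :=
  Nat.card {P : Finpartition (Finset.univ : Finset (Fin n)) // ∀ b ∈ P.parts, b.card ≤ m}

/-- The associated Bell number `B_{n,≥m}`: the number of partitions of an `n`-element set
into nonempty blocks each of size at least `m`. -/
noncomputable def associatedBell (n m : ℕ) : ℕ :=
  Nat.card {P : Finpartition (Finset.univ : Finset (Fin n)) // ∀ b ∈ P.parts, m ≤ b.card}

/-- The Bell number `B_n`: the number of partitions of an `n`-element set. -/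
noncomputable def bell (n : ℕ) : ℕ :=
  Nat.card (Finpartition (Finset.univ : Finset (Fin n)))

/-- The restricted factorial number `A_{n,≤m}`: the number of permutations of `n` elements
all of whose cycles have length at most `m`. -/
noncomputable def restrictedFactorial (n m : ℕ) : ℕ :=
  Nat.card {σ : Equiv.Perm (Fin n) // ∀ x, Function.minimalPeriod σ x ≤ m}

/-- The associated factorial number `A_{n,≥m}`: the number of permutations of `n` elements
all of whose cycles have length at least `m`. -/
noncomputable def associatedFactorial (n m : ℕ) : ℕ :=
  Nat.card {σ : Equiv.Perm (Fin n) // ∀ x, m ≤ Function.minimalPeriod σ x}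

open Finset

variable {α : Type*} [DecidableEq α]

/-- number of partitions of the finset `s` into parts of size at most 3 -/
noncomputable def pc (s : Finset α) : ℕ :=
  Nat.card {P : Finpartition s // ∀ b ∈ P.parts, b.card ≤ 3}

def bSeq : ℕ → ℕ
  | 0 => 1
  | 1 => 1
  | 2 => 2
  | (n+3) => bSeq (n+2) + (n+2) * bSeq (n+1) + (n+2).choose 2 * bSeq n

lemma avoid_part_parts {s : Finset α} (P : Finpartition s) {a : α} (ha : a ∈ s) :
    (P.avoid (P.part a)).parts = P.parts.erase (P.part a) := by
  ext b
  rw [Finpartition.mem_avoid, mem_erase]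
  constructor
  · rintro ⟨d, hd, hnle, rfl⟩
    have hne : d ≠ P.part a := by rintro rfl; exact hnle le_rfl
    have hdisj : Disjoint d (P.part a) :=
      P.disjoint hd ((P.part_mem.2 ha)) hne
    rw [Finset.sdiff_eq_self_of_disjoint hdisj]
    exact ⟨by
      intro h
      exact hne (by rw [← h]), hd⟩
  · rintro ⟨hne, hb⟩
    refine ⟨b, hb, ?_, ?_⟩
    · intro hle
      obtain ⟨x, hx⟩ := P.nonempty_of_mem_parts hb
      exact hne (P.eq_of_mem_parts hb ((P.part_mem.2 ha)) hx (hle hx))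
    · exact Finset.sdiff_eq_self_of_disjoint (P.disjoint hb ((P.part_mem.2 ha)) hne)

lemma pc_rec (s : Finset α) (a : α) (ha : a ∈ s) :
    pc s = ∑ p ∈ s.powerset.filter (fun p => a ∈ p ∧ p.card ≤ 3), pc (s \ p) := by
  classical
  rw [pc, Nat.card_eq_fintype_card, ← Finset.card_univ]
  rw [Finset.card_eq_sum_card_fiberwise
    (f := fun P : {P : Finpartition s // ∀ b ∈ P.parts, b.card ≤ 3} => P.1.part a)
    (t := s.powerset.filter (fun p => a ∈ p ∧ p.card ≤ 3))
    (fun P _ => by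
      simp only [Finset.mem_coe, mem_filter, mem_powerset]
      exact ⟨P.1.le ((P.1.part_mem.2 ha)), P.1.mem_part ha, P.2 _ ((P.1.part_mem.2 ha))⟩)]
  refine Finset.sum_congr rfl fun p hp => ?_
  simp only [mem_filter, mem_powerset] at hp
  obtain ⟨hps, hap, hp3⟩ := hp
  have hpne : p ≠ ⊥ := by
    simpa [Finset.bot_eq_empty, ← Finset.nonempty_iff_ne_empty] using ⟨a, hap⟩
  have hdisj : Disjoint (s \ p) p := Finset.sdiff_disjoint
  have hsup : (s \ p) ⊔ p = s := by
    rw [Finset.sup_eq_union]; exact Finset.sdiff_union_of_subset hps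
  rw [← Fintype.card_subtype, pc, Nat.card_eq_fintype_card]
  refine Fintype.card_congr ?_
  refine
    { toFun := fun P => ⟨P.1.1.avoid p, ?_⟩
      invFun := fun Q => ⟨⟨Q.1.extend hpne hdisj hsup, ?_⟩, ?_⟩
      left_inv := ?_
      right_inv := ?_ }
  · -- parts of avoid have card ≤ 3
    intro b hb
    obtain ⟨⟨P, hP⟩, hpart⟩ := P
    simp only at hb ⊢
    rw [← hpart, avoid_part_parts P ha] at hb
    exact hP b (Finset.mem_of_mem_erase hb)
  · -- parts of extend have card ≤ 3
    intro b hb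
    rw [Finpartition.extend_parts, Finset.mem_insert] at hb
    rcases hb with rfl | hb
    · exact hp3
    · exact Q.2 b hb
  · -- part a of the extension is p
    exact Finpartition.part_eq_of_mem _ (Finset.mem_insert_self _ _) hap
  · -- left inverse
    rintro ⟨⟨P, hP⟩, hpart⟩
    simp only
    refine Subtype.ext (Subtype.ext (Finpartition.ext ?_))
    rw [Finpartition.extend_parts]
    simp only
    rw [← hpart, avoid_part_parts P ha, Finset.insert_erase (hpart ▸ (P.part_mem.2 ha))]
  · -- right inverse
    rintro ⟨Q, hQ⟩
    simp only
    refine Subtype.ext (Finpartition.ext ?_)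
    have hRpart : (Q.extend hpne hdisj hsup).part a = p :=
      Finpartition.part_eq_of_mem _ (Finset.mem_insert_self _ _) hap
    have := avoid_part_parts (Q.extend hpne hdisj hsup) ha
    rw [hRpart] at this
    rw [this, Finpartition.extend_parts, Finset.erase_insert]
    intro hpQ
    have : p ⊆ s \ p := Q.le hpQ
    have := this hap
    simp at this
    exact this.2 hap

example : True := trivial

lemma bSeq_succ (n : ℕ) :
    bSeq (n + 1) = bSeq n + n * bSeq (n - 1) + n.choose 2 * bSeq (n - 2) := by
  match n with
  | 0 => simp [bSeq]
  | 1 => simp [bSeq]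
  | (n+2) => simp [bSeq]

lemma pc_empty : pc (∅ : Finset α) = 1 := by
  have h : ∀ P : Finpartition (∅ : Finset α), P.parts = ∅ :=
    fun P => Finpartition.parts_eq_empty_iff.mpr Finset.bot_eq_empty.symm
  rw [pc, Nat.card_eq_one_iff_unique]
  constructor
  · constructor
    rintro ⟨P, _⟩ ⟨Q, _⟩
    exact Subtype.ext (Finpartition.ext (by rw [h P, h Q]))
  · exact ⟨⟨(Finpartition.empty _).copy Finset.bot_eq_empty, by
      intro b hb
      simp [Finpartition.empty] at hb⟩⟩

lemma card_candidates (s : Finset α) (a : α) (ha : a ∈ s) (t : ℕ) (ht : 1 ≤ t) (ht3 : t ≤ 3) :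
    ((s.powerset.filter fun p => a ∈ p ∧ p.card ≤ 3).filter fun p => p.card = t).card
      = (s.card - 1).choose (t - 1) := by
  rw [show s.card - 1 = (s.erase a).card from (Finset.card_erase_of_mem ha).symm,
    ← Finset.card_powersetCard (t - 1) (s.erase a)]
  refine Finset.card_bij' (fun p _ => p.erase a) (fun q _ => insert a q) ?_ ?_ ?_ ?_
  · intro p hp
    simp only [mem_filter, mem_powerset] at hp
    obtain ⟨⟨hps, hap, -⟩, hpt⟩ := hp
    rw [Finset.mem_powersetCard]
    exact ⟨Finset.erase_subset_erase _ hps, by rw [Finset.card_erase_of_mem hap, hpt]⟩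
  · intro q hq
    rw [Finset.mem_powersetCard] at hq
    obtain ⟨hqs, hqt⟩ := hq
    have haq : a ∉ q := fun h => (Finset.mem_erase.mp (hqs h)).1 rfl
    simp only [mem_filter, mem_powerset]
    refine ⟨⟨?_, Finset.mem_insert_self _ _, ?_⟩, ?_⟩
    · exact Finset.insert_subset ha (hqs.trans (Finset.erase_subset _ _))
    · rw [Finset.card_insert_of_notMem haq, hqt]; omega
    · rw [Finset.card_insert_of_notMem haq, hqt]; omega
  · intro p hp
    simp only [mem_filter, mem_powerset] at hp
    exact Finset.insert_erase hp.1.2.1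
  · intro q hq
    rw [Finset.mem_powersetCard] at hq
    have haq : a ∉ q := fun h => (Finset.mem_erase.mp (hq.1 h)).1 rfl
    exact Finset.erase_insert haq

lemma pc_eq_bSeq_aux : ∀ (n : ℕ) (s : Finset α), s.card = n → pc s = bSeq n := by
  intro n
  induction n using Nat.strong_induction_on with
  | _ n IH =>
    intro s hn
    match n, hn with
    | 0, hn =>
      rw [Finset.card_eq_zero] at hn
      subst hn
      exact pc_empty
    | (n+1), hn =>
      have hne : s.Nonempty := Finset.card_pos.mp (by omega)
      obtain ⟨a, ha⟩ := hne
      rw [pc_rec s a ha]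
      have hstep : ∀ p ∈ s.powerset.filter (fun p => a ∈ p ∧ p.card ≤ 3),
          pc (s \ p) = bSeq (n + 1 - p.card) := by
        intro p hp
        simp only [mem_filter, mem_powerset] at hp
        have hcard : (s \ p).card = n + 1 - p.card := by
          rw [Finset.card_sdiff_of_subset hp.1, hn]
        have hlt : n + 1 - p.card < n + 1 := by
          have : 1 ≤ p.card := Finset.card_pos.mpr ⟨a, hp.2.1⟩
          omega
        exact IH _ (hcard ▸ hlt) _ hcard
      rw [Finset.sum_congr rfl hstep]
      rw [← Finset.sum_fiberwise_of_maps_to (g := fun p : Finset α => p.card) (f := fun p => bSeq (n + 1 - p.card))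
        (t := Finset.Icc 1 3) (fun p hp => by
          simp only [mem_filter, mem_powerset] at hp
          have : 1 ≤ p.card := Finset.card_pos.mpr ⟨a, hp.2.1⟩
          simp only [Finset.mem_Icc]
          exact ⟨this, hp.2.2⟩)]
      have hinner : ∀ t ∈ Finset.Icc 1 3,
          (∑ p ∈ (s.powerset.filter fun p => a ∈ p ∧ p.card ≤ 3).filter
              (fun p => p.card = t), bSeq (n + 1 - p.card))
            = n.choose (t - 1) * bSeq (n + 1 - t) := by
        intro t htt
        rw [Finset.mem_Icc] at htt
        rw [Finset.sum_congr rfl (fun p hp => by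
          rw [(Finset.mem_filter.mp hp).2]), Finset.sum_const, smul_eq_mul]
        congr 1
        rw [card_candidates s a ha t htt.1 htt.2, hn]
        simp
      rw [Finset.sum_congr rfl hinner]
      have : Finset.Icc 1 3 = ({1, 2, 3} : Finset ℕ) := rfl
      rw [this]
      rw [Finset.sum_insert (by decide), Finset.sum_insert (by decide),
        Finset.sum_singleton]
      rw [bSeq_succ n]
      simp [Nat.choose_one_right]
      ring

/-! ### Part B: the algebraic identity -/

def idx (n m : ℕ) : Finset (ℕ × ℕ × ℕ) :=
  ((range (n+1)) ×ˢ (range (m+1)) ×ˢ (range (n+1))).filter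
    (fun x => 2*x.1 + x.2.1 + x.2.2 ≤ n ∧ x.1 + 2*x.2.1 + x.2.2 ≤ m)

lemma mem_idx {n m : ℕ} {x : ℕ × ℕ × ℕ} :
    x ∈ idx n m ↔ 2*x.1 + x.2.1 + x.2.2 ≤ n ∧ x.1 + 2*x.2.1 + x.2.2 ≤ m := by
  obtain ⟨p, q, k⟩ := x
  simp only [idx, Finset.mem_filter, Finset.mem_product, Finset.mem_range]
  constructor
  · rintro ⟨-, h⟩; exact h
  · rintro ⟨h1, h2⟩; exact ⟨⟨by omega, by omega, by omega⟩, h1, h2⟩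

noncomputable def trm (n m : ℕ) (x : ℕ × ℕ × ℕ) : ℚ :=
  ((n.factorial : ℚ) * m.factorial * bSeq (n - (2*x.1 + x.2.1 + x.2.2)) *
      bSeq (m - (x.1 + 2*x.2.1 + x.2.2))) /
    (x.2.2.factorial * (n - (2*x.1 + x.2.1 + x.2.2)).factorial *
      (m - (x.1 + 2*x.2.1 + x.2.2)).factorial * x.1.factorial * x.2.1.factorial *
      2 ^ (x.1 + x.2.1))

noncomputable def Ssum (n m : ℕ) : ℚ := ∑ x ∈ idx n m, trm n m x

lemma fac_ne (t : ℕ) : ((t.factorial : ℚ)) ≠ 0 := by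
  exact_mod_cast t.factorial_ne_zero

lemma two_pow_ne (t : ℕ) : ((2 : ℚ) ^ t) ≠ 0 := pow_ne_zero _ two_ne_zero

lemma idx_zero (n : ℕ) : idx n 0 = {(0, 0, 0)} := by
  ext x
  obtain ⟨p, q, k⟩ := x
  rw [mem_idx, Finset.mem_singleton]
  dsimp only
  constructor
  · rintro ⟨h1, h2⟩
    have hp : p = 0 := by omega
    have hq : q = 0 := by omega
    have hk : k = 0 := by omega
    subst hp; subst hq; subst hk; rfl
  · rintro h
    injection h with h1 h2
    injection h2 with h2 h3
    subst h1; subst h2; subst h3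
    exact ⟨by omega, by omega⟩

lemma Ssum_zero (n : ℕ) : Ssum n 0 = bSeq n := by
  rw [Ssum, idx_zero, Finset.sum_singleton, trm]
  simp only [Nat.factorial_zero, Nat.cast_one, mul_one, Nat.sub_zero, Nat.mul_zero, Nat.add_zero,
    Nat.zero_add, pow_zero, one_mul, mul_zero, add_zero, zero_add]
  norm_num [bSeq]
  exact mul_div_cancel_left₀ _ (fac_ne n)

lemma two_mul_choose_two (t : ℕ) : 2 * t.choose 2 = t * (t - 1) := by
  rw [Nat.choose_two_right]
  rcases t with _ | t
  · simp
  · simp only [Nat.succ_sub_one]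
    have h : 2 ∣ (t + 1) * t := by
      rw [mul_comm]; exact (Nat.even_mul_succ_self t).two_dvd
    exact Nat.mul_div_cancel' h

lemma choose_two_add (a b : ℕ) :
    (a + b).choose 2 = a.choose 2 + a * b + b.choose 2 := by
  induction b with
  | zero => simp
  | succ b IH =>
    have e1 : (a + (b+1)).choose 2 = (a+b).choose 1 + (a+b).choose 2 := by
      have h : a + (b+1) = (a+b) + 1 := by ring
      rw [h]
      exact Nat.choose_succ_succ _ _
    have e2 : (b+1).choose 2 = b.choose 1 + b.choose 2 := Nat.choose_succ_succ _ _
    rw [e1, IH, e2, Nat.choose_one_right, Nat.choose_one_right]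
    ring

lemma cast_choose_two (t : ℕ) : ((t.choose 2 : ℕ) : ℚ) = (t : ℚ) * ((t : ℚ) - 1) / 2 := by
  rcases t with _ | s
  · simp
  · have h := two_mul_choose_two (s + 1)
    simp only [Nat.succ_sub_one] at h
    have h' : (2 : ℚ) * ((s+1).choose 2 : ℕ) = ((s:ℚ)+1) * s := by exact_mod_cast h
    push_cast
    linarith

lemma trm_def (n m p q k : ℕ) :
    trm n m (p, q, k) =
      ((n.factorial : ℚ) * m.factorial * bSeq (n - (2*p+q+k)) * bSeq (m - (p+2*q+k))) /
        (k.factorial * (n - (2*p+q+k)).factorial * (m - (p+2*q+k)).factorial *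
          p.factorial * q.factorial * 2 ^ (p+q)) := rfl

/-- (ii): the `(1,1)`-block contribution. -/
lemma sumK (n m : ℕ) :
    ∑ x ∈ idx n (m+1), (x.2.2 : ℚ) * trm n (m+1) x
      = ((m : ℚ) + 1) * n * Ssum (n-1) m := by
  rcases n with _ | n'
  · rw [Finset.sum_eq_zero, Nat.cast_zero, mul_zero, zero_mul]
    intro x hx
    rw [mem_idx] at hx
    have hk : x.2.2 = 0 := by omega
    rw [hk, Nat.cast_zero, zero_mul]
  · rw [← Finset.sum_filter_of_ne (p := fun x : ℕ×ℕ×ℕ => x.2.2 ≠ 0)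
      (fun x _ h => by
        intro hk
        exact h (by rw [hk, Nat.cast_zero, zero_mul]))]
    rw [show (Nat.succ n' - 1) = n' from rfl]
    rw [Ssum, Finset.mul_sum]
    refine Finset.sum_nbij' (fun x => (x.1, x.2.1, x.2.2 - 1))
      (fun y => (y.1, y.2.1, y.2.2 + 1)) ?_ ?_ ?_ ?_ ?_
    · intro x hx
      rw [Finset.mem_filter, mem_idx] at hx
      rw [mem_idx]
      dsimp only
      omega
    · intro y hy
      rw [mem_idx] at hy
      rw [Finset.mem_filter, mem_idx]
      dsimp only
      omega
    · intro x hx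
      rw [Finset.mem_filter, mem_idx] at hx
      obtain ⟨p, q, k⟩ := x
      dsimp only at hx ⊢
      have : k - 1 + 1 = k := by omega
      rw [this]
    · intro y _
      obtain ⟨p, q, k⟩ := y
      dsimp only
      rw [Nat.add_sub_cancel]
    · intro x hx
      rw [Finset.mem_filter, mem_idx] at hx
      obtain ⟨p, q, k⟩ := x
      dsimp only at hx ⊢
      obtain ⟨⟨h1, h2⟩, h3⟩ := hx
      obtain ⟨k', rfl⟩ : ∃ k', k = k' + 1 := ⟨k - 1, by omega⟩
      rw [Nat.add_sub_cancel, trm_def, trm_def]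
      have e1 : n' + 1 - (2*p+q+(k'+1)) = n' - (2*p+q+k') := by omega
      have e2 : m + 1 - (p+2*q+(k'+1)) = m - (p+2*q+k') := by omega
      rw [e1, e2, Nat.factorial_succ n', Nat.factorial_succ m, Nat.factorial_succ k']
      push_cast
      field_simp

/-- (iii): the `(1,2)`-block contribution. -/
lemma sumQ (n m : ℕ) :
    ∑ x ∈ idx n (m+1), (2 * x.2.1 : ℚ) * trm n (m+1) x
      = ((m : ℚ) + 1) * (n * m * Ssum (n-1) (m-1)) := by
  rcases n with _ | n'
  · rw [Finset.sum_eq_zero (fun x hx => by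
      rw [mem_idx] at hx
      have hq : x.2.1 = 0 := by omega
      rw [hq, Nat.cast_zero, mul_zero, zero_mul])]
    norm_num
  rcases m with _ | m'
  · rw [Finset.sum_eq_zero (fun x hx => by
      rw [mem_idx] at hx
      have hq : x.2.1 = 0 := by omega
      rw [hq, Nat.cast_zero, mul_zero, zero_mul])]
    norm_num
  · rw [← Finset.sum_filter_of_ne (p := fun x : ℕ×ℕ×ℕ => x.2.1 ≠ 0)
      (fun x _ h => by
        intro hq
        exact h (by rw [hq, Nat.cast_zero, mul_zero, zero_mul]))]
    rw [show (Nat.succ n' - 1) = n' from rfl, show (Nat.succ m' - 1) = m' from rfl]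
    rw [Ssum, Finset.mul_sum, Finset.mul_sum]
    refine Finset.sum_nbij' (fun x => (x.1, x.2.1 - 1, x.2.2))
      (fun y => (y.1, y.2.1 + 1, y.2.2)) ?_ ?_ ?_ ?_ ?_
    · intro x hx
      rw [Finset.mem_filter, mem_idx] at hx
      rw [mem_idx]
      dsimp only
      omega
    · intro y hy
      rw [mem_idx] at hy
      rw [Finset.mem_filter, mem_idx]
      dsimp only
      omega
    · intro x hx
      rw [Finset.mem_filter, mem_idx] at hx
      obtain ⟨p, q, k⟩ := x
      dsimp only at hx ⊢
      have : q - 1 + 1 = q := by omega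
      rw [this]
    · intro y _
      obtain ⟨p, q, k⟩ := y
      dsimp only
      rw [Nat.add_sub_cancel]
    · intro x hx
      rw [Finset.mem_filter, mem_idx] at hx
      obtain ⟨p, q, k⟩ := x
      dsimp only at hx ⊢
      obtain ⟨⟨h1, h2⟩, h3⟩ := hx
      obtain ⟨q', rfl⟩ : ∃ q', q = q' + 1 := ⟨q - 1, by omega⟩
      rw [Nat.add_sub_cancel, trm_def, trm_def]
      have e1 : n' + 1 - (2*p+(q'+1)+k) = n' - (2*p+q'+k) := by omega
      have e2 : m' + 1 + 1 - (p+2*(q'+1)+k) = m' - (p+2*q'+k) := by omega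
      rw [e1, e2, Nat.factorial_succ n', Nat.factorial_succ (m'+1), Nat.factorial_succ m',
        Nat.factorial_succ q']
      have e3 : p + (q' + 1) = (p + q') + 1 := by omega
      rw [e3, pow_succ]
      push_cast
      field_simp

/-- (iv): the `(2,1)`-block contribution. -/
lemma sumP (n m : ℕ) :
    ∑ x ∈ idx n (m+1), (x.1 : ℚ) * trm n (m+1) x
      = ((m : ℚ) + 1) * ((n.choose 2 : ℕ) * Ssum (n-2) m) := by
  match n with
  | 0 =>
    rw [Finset.sum_eq_zero (fun x hx => by
      rw [mem_idx] at hx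
      have hp : x.1 = 0 := by omega
      rw [hp, Nat.cast_zero, zero_mul])]
    norm_num
  | 1 =>
    rw [Finset.sum_eq_zero (fun x hx => by
      rw [mem_idx] at hx
      have hp : x.1 = 0 := by omega
      rw [hp, Nat.cast_zero, zero_mul])]
    norm_num
  | (n'+2) =>
    rw [← Finset.sum_filter_of_ne (p := fun x : ℕ×ℕ×ℕ => x.1 ≠ 0)
      (fun x _ h => by
        intro hp
        exact h (by rw [hp, Nat.cast_zero, zero_mul]))]
    rw [show (n'+2-2) = n' from rfl]
    rw [Ssum, Finset.mul_sum, Finset.mul_sum]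
    refine Finset.sum_nbij' (fun x => (x.1 - 1, x.2.1, x.2.2))
      (fun y => (y.1 + 1, y.2.1, y.2.2)) ?_ ?_ ?_ ?_ ?_
    · intro x hx
      rw [Finset.mem_filter, mem_idx] at hx
      rw [mem_idx]
      dsimp only
      omega
    · intro y hy
      rw [mem_idx] at hy
      rw [Finset.mem_filter, mem_idx]
      dsimp only
      omega
    · intro x hx
      rw [Finset.mem_filter, mem_idx] at hx
      obtain ⟨p, q, k⟩ := x
      dsimp only at hx ⊢
      have : p - 1 + 1 = p := by omega
      rw [this]
    · intro y _
      obtain ⟨p, q, k⟩ := y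
      dsimp only
      rw [Nat.add_sub_cancel]
    · intro x hx
      rw [Finset.mem_filter, mem_idx] at hx
      obtain ⟨p, q, k⟩ := x
      dsimp only at hx ⊢
      obtain ⟨⟨h1, h2⟩, h3⟩ := hx
      obtain ⟨p', rfl⟩ : ∃ p', p = p' + 1 := ⟨p - 1, by omega⟩
      rw [Nat.add_sub_cancel, trm_def, trm_def]
      have e1 : n' + 2 - (2*(p'+1)+q+k) = n' - (2*p'+q+k) := by omega
      have e2 : m + 1 - ((p'+1)+2*q+k) = m - (p'+2*q+k) := by omega
      rw [e1, e2, Nat.factorial_succ (n'+1), Nat.factorial_succ n', Nat.factorial_succ m,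
        Nat.factorial_succ p']
      have e3 : (p' + 1) + q = (p' + q) + 1 := by omega
      rw [e3, pow_succ, cast_choose_two]
      push_cast
      field_simp
      ring

noncomputable def U1 (n m : ℕ) (x : ℕ × ℕ × ℕ) : ℚ :=
  ((m - (x.1+2*x.2.1+x.2.2) : ℕ) : ℚ) *
    (((n.factorial : ℚ) * m.factorial * bSeq (n - (2*x.1+x.2.1+x.2.2)) *
        bSeq (m - (x.1+2*x.2.1+x.2.2) - 1)) /
      (x.2.2.factorial * (n - (2*x.1+x.2.1+x.2.2)).factorial *
        (m - (x.1+2*x.2.1+x.2.2)).factorial * x.1.factorial * x.2.1.factorial *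
        2 ^ (x.1+x.2.1)))

noncomputable def U2 (n m : ℕ) (x : ℕ × ℕ × ℕ) : ℚ :=
  (((m - (x.1+2*x.2.1+x.2.2)).choose 2 : ℕ) : ℚ) *
    (((n.factorial : ℚ) * m.factorial * bSeq (n - (2*x.1+x.2.1+x.2.2)) *
        bSeq (m - (x.1+2*x.2.1+x.2.2) - 2)) /
      (x.2.2.factorial * (n - (2*x.1+x.2.1+x.2.2)).factorial *
        (m - (x.1+2*x.2.1+x.2.2)).factorial * x.1.factorial * x.2.1.factorial *
        2 ^ (x.1+x.2.1)))

lemma sumU1 (n m : ℕ) : ∑ x ∈ idx n m, U1 n m x = (m : ℚ) * Ssum n (m-1) := by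
  rcases m with _ | m'
  · rw [Finset.sum_eq_zero (fun x hx => by
      rw [mem_idx] at hx
      have h : (0 : ℕ) - (x.1+2*x.2.1+x.2.2) = 0 := by omega
      rw [U1, h, Nat.cast_zero, zero_mul])]
    norm_num
  · rw [show (Nat.succ m' - 1) = m' from rfl]
    have hsub : idx n m' ⊆ idx n (m'+1) := fun x hx => by
      rw [mem_idx] at hx ⊢; omega
    rw [← Finset.sum_subset hsub (fun x hx hxn => by
      rw [mem_idx] at hx
      have hxn' : ¬ (x.1+2*x.2.1+x.2.2 ≤ m') := fun h => hxn (by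
        rw [mem_idx]; exact ⟨hx.1, h⟩)
      have h : (m'+1) - (x.1+2*x.2.1+x.2.2) = 0 := by omega
      rw [U1, h, Nat.cast_zero, zero_mul])]
    rw [Ssum, Finset.mul_sum]
    refine Finset.sum_congr rfl fun x hx => ?_
    rw [mem_idx] at hx
    obtain ⟨p, q, k⟩ := x
    dsimp only at hx ⊢
    obtain ⟨h1, h2⟩ := hx
    rw [U1, trm_def]
    dsimp only
    have e1 : m'+1 - (p+2*q+k) = (m' - (p+2*q+k)) + 1 := by omega
    have e2 : m'+1 - (p+2*q+k) - 1 = m' - (p+2*q+k) := by omega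
    rw [e2, e1, Nat.factorial_succ (m' - (p+2*q+k)), Nat.factorial_succ m']
    set a := n - (2*p+q+k) with ha
    set c := m' - (p+2*q+k) with hc
    have hne : (c : ℚ) + 1 ≠ 0 := by positivity
    push_cast
    field_simp [hne]

lemma sumU2 (n m : ℕ) :
    ∑ x ∈ idx n m, U2 n m x = ((m.choose 2 : ℕ) : ℚ) * Ssum n (m-2) := by
  match m with
  | 0 =>
    rw [Finset.sum_eq_zero (fun x hx => by
      rw [mem_idx] at hx
      have h : ((0 : ℕ) - (x.1+2*x.2.1+x.2.2)).choose 2 = 0 :=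
        Nat.choose_eq_zero_of_lt (by omega)
      rw [U2, h, Nat.cast_zero, zero_mul])]
    norm_num
  | 1 =>
    rw [Finset.sum_eq_zero (fun x hx => by
      rw [mem_idx] at hx
      have h : ((1 : ℕ) - (x.1+2*x.2.1+x.2.2)).choose 2 = 0 :=
        Nat.choose_eq_zero_of_lt (by omega)
      rw [U2, h, Nat.cast_zero, zero_mul])]
    norm_num
  | (m'+2) =>
    rw [show (m'+2-2) = m' from rfl]
    have hsub : idx n m' ⊆ idx n (m'+2) := fun x hx => by
      rw [mem_idx] at hx ⊢; omega
    rw [← Finset.sum_subset hsub (fun x hx hxn => by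
      rw [mem_idx] at hx
      have hxn' : ¬ (x.1+2*x.2.1+x.2.2 ≤ m') := fun h => hxn (by
        rw [mem_idx]; exact ⟨hx.1, h⟩)
      have h : ((m'+2) - (x.1+2*x.2.1+x.2.2)).choose 2 = 0 :=
        Nat.choose_eq_zero_of_lt (by omega)
      rw [U2, h, Nat.cast_zero, zero_mul])]
    rw [Ssum, Finset.mul_sum]
    refine Finset.sum_congr rfl fun x hx => ?_
    rw [mem_idx] at hx
    obtain ⟨p, q, k⟩ := x
    dsimp only at hx ⊢
    obtain ⟨h1, h2⟩ := hx
    rw [U2, trm_def]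
    dsimp only
    have e1 : m'+2 - (p+2*q+k) = (m' - (p+2*q+k)) + 2 := by omega
    have e2 : m'+2 - (p+2*q+k) - 2 = m' - (p+2*q+k) := by omega
    rw [e2, e1, Nat.factorial_succ (m' - (p+2*q+k) + 1),
      Nat.factorial_succ (m' - (p+2*q+k)), Nat.factorial_succ (m'+1), Nat.factorial_succ m',
      cast_choose_two, cast_choose_two]
    set a := n - (2*p+q+k) with ha
    set c := m' - (p+2*q+k) with hc
    have hne1 : (c : ℚ) + 1 ≠ 0 := by positivity
    have hne2 : (c : ℚ) + 2 ≠ 0 := by positivity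
    push_cast
    field_simp [hne1, hne2]
    ring

lemma sumPure (n m : ℕ) :
    ∑ x ∈ idx n (m+1), (((m+1) - (x.1+2*x.2.1+x.2.2) : ℕ) : ℚ) * trm n (m+1) x
      = ((m : ℚ) + 1) * (Ssum n m + m * Ssum n (m-1) + ((m.choose 2 : ℕ) : ℚ) * Ssum n (m-2)) := by
  have hsub : idx n m ⊆ idx n (m+1) := fun x hx => by
    rw [mem_idx] at hx ⊢; omega
  rw [← Finset.sum_subset hsub (fun x hx hxn => by
    rw [mem_idx] at hx
    have hxn' : ¬ (x.1+2*x.2.1+x.2.2 ≤ m) := fun h => hxn (by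
      rw [mem_idx]; exact ⟨hx.1, h⟩)
    have h : (m+1) - (x.1+2*x.2.1+x.2.2) = 0 := by omega
    rw [h, Nat.cast_zero, zero_mul])]
  have expand : ∀ x ∈ idx n m,
      (((m+1) - (x.1+2*x.2.1+x.2.2) : ℕ) : ℚ) * trm n (m+1) x
        = ((m : ℚ) + 1) * (trm n m x + U1 n m x + U2 n m x) := by
    intro x hx
    rw [mem_idx] at hx
    obtain ⟨p, q, k⟩ := x
    dsimp only at hx ⊢
    obtain ⟨h1, h2⟩ := hx
    rw [trm_def, trm_def, U1, U2]
    dsimp only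
    have e1 : m+1 - (p+2*q+k) = (m - (p+2*q+k)) + 1 := by omega
    have hb := bSeq_succ (m - (p+2*q+k))
    rw [e1, hb, Nat.factorial_succ (m - (p+2*q+k)), Nat.factorial_succ m]
    set a := n - (2*p+q+k) with ha
    set c := m - (p+2*q+k) with hc
    have hne : (c : ℚ) + 1 ≠ 0 := by positivity
    push_cast
    field_simp [hne]
  rw [Finset.sum_congr rfl expand, ← Finset.mul_sum, Finset.sum_add_distrib,
    Finset.sum_add_distrib, sumU1, sumU2]
  simp only [Ssum]

lemma Ssum_succ (n m : ℕ) :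
    Ssum n (m+1) = Ssum n m + m * Ssum n (m-1) + ((m.choose 2 : ℕ) : ℚ) * Ssum n (m-2)
      + n * Ssum (n-1) m + n * m * Ssum (n-1) (m-1)
      + ((n.choose 2 : ℕ) : ℚ) * Ssum (n-2) m := by
  have hm : (m : ℚ) + 1 ≠ 0 := by positivity
  have key : ∀ x ∈ idx n (m+1), trm n (m+1) x =
      ((((m+1) - (x.1+2*x.2.1+x.2.2) : ℕ) : ℚ) * trm n (m+1) x
        + (x.2.2 : ℚ) * trm n (m+1) x + (2 * x.2.1 : ℚ) * trm n (m+1) x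
        + (x.1 : ℚ) * trm n (m+1) x) / ((m : ℚ) + 1) := by
    intro x hx
    rw [mem_idx] at hx
    have e : ((m+1) - (x.1+2*x.2.1+x.2.2)) + x.2.2 + 2*x.2.1 + x.1 = m+1 := by omega
    have e' : (((m+1) - (x.1+2*x.2.1+x.2.2) : ℕ) : ℚ) + x.2.2 + 2*x.2.1 + x.1
        = (m : ℚ) + 1 := by exact_mod_cast congrArg (Nat.cast : ℕ → ℚ) e
    rw [eq_div_iff hm]
    linear_combination (-(trm n (m+1) x)) * e'
  have h1 : Ssum n (m+1) = ∑ x ∈ idx n (m+1), trm n (m+1) x := rfl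
  rw [h1, Finset.sum_congr rfl key, ← Finset.sum_div, Finset.sum_add_distrib,
    Finset.sum_add_distrib, Finset.sum_add_distrib, sumPure, sumK, sumQ, sumP]
  field_simp

lemma Ssum_eq : ∀ m n : ℕ, Ssum n m = (bSeq (n+m) : ℚ) := by
  intro m
  induction m using Nat.strong_induction_on with
  | _ m IH =>
    intro n
    match m with
    | 0 => rw [Nat.add_zero]; exact Ssum_zero n
    | (m'+1) =>
      rw [Ssum_succ n m']
      have h0 : Ssum n m' = (bSeq (n+m') : ℚ) := IH m' (by omega) n
      have h1 : (m' : ℚ) * Ssum n (m'-1) = m' * bSeq (n+m'-1) := by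
        rcases m' with _ | m''
        · simp
        · rw [show (m''+1-1) = m'' from rfl, IH m'' (by omega) n,
            show n+(m''+1)-1 = n+m'' from by omega]
      have h2 : ((m'.choose 2 : ℕ) : ℚ) * Ssum n (m'-2)
          = (m'.choose 2 : ℕ) * bSeq (n+m'-2) := by
        match m' with
        | 0 => simp
        | 1 => norm_num [Nat.choose]
        | (m''+2) =>
          rw [show (m''+2-2) = m'' from rfl, IH m'' (by omega) n,
            show n+(m''+2)-2 = n+m'' from by omega]
      have h3 : (n : ℚ) * Ssum (n-1) m' = n * bSeq (n+m'-1) := by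
        rcases n with _ | n''
        · simp
        · rw [show (n''+1-1) = n'' from rfl, IH m' (by omega) n'',
            show n''+1+m'-1 = n''+m' from by omega]
      have h4 : (n : ℚ) * m' * Ssum (n-1) (m'-1) = n * m' * bSeq (n+m'-2) := by
        rcases n with _ | n''
        · simp
        rcases m' with _ | m''
        · simp
        · rw [show (n''+1-1) = n'' from rfl, show (m''+1-1) = m'' from rfl,
            IH m'' (by omega) n'', show n''+1+(m''+1)-2 = n''+m'' from by omega]
      have h5 : ((n.choose 2 : ℕ) : ℚ) * Ssum (n-2) m'
          = (n.choose 2 : ℕ) * bSeq (n+m'-2) := by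
        match n with
        | 0 => simp
        | 1 => norm_num [Nat.choose]
        | (n''+2) =>
          rw [show (n''+2-2) = n'' from rfl, IH m' (by omega) n'',
            show n''+2+m'-2 = n''+m' from by omega]
      rw [h0, h1, h2, h3, h4, h5]
      have hrecQ : ((bSeq (n+(m'+1)) : ℕ) : ℚ)
          = bSeq (n+m') + ((n+m' : ℕ) : ℚ) * bSeq (n+m'-1)
            + (((n+m').choose 2 : ℕ) : ℚ) * bSeq (n+m'-2) := by
        rw [show n+(m'+1) = (n+m')+1 from rfl, bSeq_succ (n+m')]
        push_cast
        ring
      rw [hrecQ]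
      have hch : (((n+m').choose 2 : ℕ) : ℚ)
          = ((n.choose 2 : ℕ) : ℚ) + (n : ℚ) * m' + ((m'.choose 2 : ℕ) : ℚ) := by
        rw [choose_two_add n m']
        push_cast
        ring
      rw [hch]
      push_cast
      ring

lemma restrictedBell_three_eq (t : ℕ) : restrictedBell t 3 = bSeq t := by
  have h : restrictedBell t 3 = pc (Finset.univ : Finset (Fin t)) := rfl
  rw [h, pc_eq_bSeq_aux (Finset.univ : Finset (Fin t)).card _ rfl, Finset.card_fin]


/-- A Spivey-like formula for the restricted Bell numbers `B_{n,≤3}`, as an identity of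
rational numbers.  The inner sum runs over all `k` with `0 ≤ k ≤ min(i,j,2i-j,2j-i)` and
`k ≡ -i-j (mod 3)` (equivalently `i+j+k ≡ 0 (mod 3)`), which guarantees that `(2i-j-k)/3`,
`(2j-i-k)/3` and `(i+j-2k)/3` are nonnegative integers. -/
theorem restrictedBell_three_spivey (n m : ℕ) :
    (restrictedBell (n + m) 3 : ℚ) =
      ∑ i ∈ Finset.range (n + 1),
        ∑ j ∈ Finset.Icc ((i + 1) / 2) (min m (2 * i)),
          ∑ k ∈ (Finset.range (min (min i j) (min (2 * i - j) (2 * j - i)) + 1)).filter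
              (fun k => (i + j + k) % 3 = 0),
            (n.factorial : ℚ) * m.factorial * restrictedBell (n - i) 3 *
                restrictedBell (m - j) 3 /
              (k.factorial * (n - i).factorial * (m - j).factorial *
                ((2 * i - j - k) / 3).factorial * ((2 * j - i - k) / 3).factorial *
                2 ^ ((i + j - 2 * k) / 3)) := by
  simp only [restrictedBell_three_eq]
  rw [← Ssum_eq m n, Ssum]
  simp only [Finset.sum_sigma']
  refine Finset.sum_nbij'
    (fun x => ⟨2*x.1+x.2.1+x.2.2, x.1+2*x.2.1+x.2.2, x.2.2⟩)
    (fun y => ((2*y.1 - y.2.1 - y.2.2)/3, (2*y.2.1 - y.1 - y.2.2)/3, y.2.2))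
    ?_ ?_ ?_ ?_ ?_
  · intro x hx
    rw [mem_idx] at hx
    simp only [Finset.mem_sigma, Finset.mem_range, Finset.mem_Icc, Finset.mem_filter,
      le_min_iff, Nat.lt_succ_iff]
    omega
  · intro y hy
    simp only [Finset.mem_sigma, Finset.mem_range, Finset.mem_Icc, Finset.mem_filter,
      Nat.lt_succ_iff, le_min_iff] at hy
    rw [mem_idx]
    dsimp only
    omega
  · intro x hx
    rw [mem_idx] at hx
    obtain ⟨p, q, k⟩ := x
    dsimp only at hx ⊢
    have e1 : (2*(2*p+q+k) - (p+2*q+k) - k)/3 = p := by omega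
    have e2 : (2*(p+2*q+k) - (2*p+q+k) - k)/3 = q := by omega
    rw [e1, e2]
  · intro y hy
    simp only [Finset.mem_sigma, Finset.mem_range, Finset.mem_Icc, Finset.mem_filter,
      Nat.lt_succ_iff, le_min_iff] at hy
    obtain ⟨i, j, k⟩ := y
    dsimp only at hy ⊢
    refine Sigma.ext (by dsimp only; omega) (heq_of_eq (Sigma.ext (by dsimp only; omega)
      (heq_of_eq rfl)))
  · intro x hx
    rw [mem_idx] at hx
    obtain ⟨p, q, k⟩ := x
    dsimp only at hx ⊢
    have e1 : (2*(2*p+q+k) - (p+2*q+k) - k)/3 = p := by omega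
    have e2 : (2*(p+2*q+k) - (2*p+q+k) - k)/3 = q := by omega
    have e3 : ((2*p+q+k) + (p+2*q+k) - 2*k)/3 = p + q := by omega
    rw [trm_def, e1, e2, e3]
end

section
/- For every natural number n and every integer k ≥ 2, the associated Bell numbers can be computed from the Bell numbers and the restricted Bell numbers via B_{n,≥k} = B_n - ∑_{i=1}^{n} C(n,i) · B_{i,≤k-1} · B_{n-i,≥k}. -/
open Finset

variable {α β : Type*}

/-- Map of a Finset-sup of Finsets along an embedding. -/
lemma mapSupAux [DecidableEq α] [DecidableEq β] (g : β ↪ α) {ι : Type*} (s : Finset ι) (f : ι → Finset β) :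
    (s.sup f).map g = s.sup fun i => (f i).map g := by
  induction s using Finset.cons_induction with
  | empty => simp
  | cons a s ha ih => simp [Finset.sup_cons, Finset.map_union, ih]

/-- Disjoint union of two finpartitions. -/
def Finpartition.disjUnionAux [DecidableEq α] {s t : Finset α} (P : Finpartition s)
    (Q : Finpartition t) (h : Disjoint s t) : Finpartition (s ∪ t) where
  parts := P.parts ∪ Q.parts
  supIndep := by
    rw [Finset.supIndep_iff_pairwiseDisjoint, coe_union]
    refine Set.pairwiseDisjoint_union.2 ⟨P.disjoint, Q.disjoint, fun a ha b hb _ => ?_⟩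
    exact h.mono (P.le ha) (Q.le hb)
  sup_parts := by rw [Finset.sup_union, P.sup_parts, Q.sup_parts]; rw [Finset.sup_eq_union]
  bot_notMem := by
    rw [Finset.mem_union]
    rintro (h' | h')
    exacts [P.bot_notMem h', Q.bot_notMem h']

@[simp] lemma parts_disjUnionAux [DecidableEq α] {s t : Finset α} (P : Finpartition s)
    (Q : Finpartition t) (h : Disjoint s t) :
    (P.disjUnionAux Q h).parts = P.parts ∪ Q.parts := rfl

/-- Map a finpartition along an embedding. -/
def Finpartition.mapEmbAux [DecidableEq α] [DecidableEq β] (g : β ↪ α) {t : Finset β}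
    (P : Finpartition t) : Finpartition (t.map g) where
  parts := P.parts.image (Finset.map g)
  supIndep := by
    rw [Finset.supIndep_iff_pairwiseDisjoint, coe_image]
    rintro a ⟨a', ha', rfl⟩ b ⟨b', hb', rfl⟩ hab
    have hne : a' ≠ b' := fun h => hab (by rw [h])
    simpa [Function.onFun, Finset.disjoint_map] using P.disjoint ha' hb' hne
  sup_parts := by
    rw [Finset.sup_image]
    conv_rhs => rw [← P.sup_parts, mapSupAux]
    rfl
  bot_notMem := by
    simp only [Finset.mem_image, bot_eq_empty]
    rintro ⟨b, hb, hb'⟩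
    rw [Finset.map_eq_empty] at hb'
    rw [hb'] at hb
    exact P.bot_notMem hb

lemma card_finpartition_map [DecidableEq α] [DecidableEq β] (g : β ↪ α) (t : Finset β)
    (p : ℕ → Prop) :
    Nat.card {P : Finpartition (t.map g) // ∀ b ∈ P.parts, p b.card}
      = Nat.card {P : Finpartition t // ∀ b ∈ P.parts, p b.card} := by
  classical
  symm
  apply Nat.card_eq_of_bijective
    (f := fun P => ⟨P.1.mapEmbAux g, by
      rintro b hb
      obtain ⟨a, ha, rfl⟩ := Finset.mem_image.1 hb
      simpa [Finset.card_map] using P.2 a ha⟩)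
  constructor
  · rintro ⟨P, hP⟩ ⟨Q, hQ⟩ h
    simp only [Subtype.mk.injEq] at h ⊢
    ext b
    have := congrArg Finpartition.parts h
    simp only [Finpartition.mapEmbAux] at this
    constructor
    · intro hb
      have : b.map g ∈ Q.parts.image (Finset.map g) := by
        rw [← this]; exact Finset.mem_image_of_mem _ hb
      obtain ⟨c, hc, hcb⟩ := Finset.mem_image.1 this
      rwa [← Finset.map_injective g hcb]
    · intro hb
      have : b.map g ∈ P.parts.image (Finset.map g) := by
        rw [this]; exact Finset.mem_image_of_mem _ hb
      obtain ⟨c, hc, hcb⟩ := Finset.mem_image.1 this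
      rwa [← Finset.map_injective g hcb]
  · rintro ⟨Q, hQ⟩
    set pre : Finset α → Finset β := fun b => b.preimage g g.injective.injOn with hpre_def
    have key : ∀ b ∈ Q.parts, (pre b).map g = b := by
      intro b hb
      have hsub : b ⊆ t.map g := Q.le hb
      ext x
      simp only [Finset.mem_map, Finset.mem_preimage, hpre_def]
      constructor
      · rintro ⟨y, hy, rfl⟩; exact hy
      · intro hx
        obtain ⟨y, _, rfl⟩ := Finset.mem_map.1 (hsub hx)
        exact ⟨y, hx, rfl⟩
    refine ⟨⟨⟨Q.parts.image pre, ?_, ?_, ?_⟩, ?_⟩, ?_⟩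
    · rw [Finset.supIndep_iff_pairwiseDisjoint, coe_image]
      rintro a ⟨a', ha', rfl⟩ b ⟨b', hb', rfl⟩ hab
      have hne : a' ≠ b' := fun h => hab (by rw [h])
      have ha'' : a' ∈ Q.parts := ha'
      have hb'' : b' ∈ Q.parts := hb'
      have hd := Q.disjoint ha' hb' hne
      simp only [Function.onFun, id_eq] at hd ⊢
      rw [← Finset.disjoint_map g, key a' ha'', key b' hb'']
      exact hd
    · apply Finset.map_injective g
      rw [mapSupAux, Finset.sup_image]
      conv_rhs => rw [← Q.sup_parts]
      exact Finset.sup_congr rfl fun b hb => key b hb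
    · simp only [Finset.mem_image, bot_eq_empty]
      rintro ⟨b, hb, hb'⟩
      apply Q.bot_notMem
      have := key b hb
      rw [hb'] at this
      simp only [Finset.map_empty] at this
      rw [bot_eq_empty, this]
      exact hb
    · intro b hb
      obtain ⟨c, hc, rfl⟩ := Finset.mem_image.1 hb
      have hcard : (pre c).card = c.card := by
        conv_rhs => rw [← key c hc, Finset.card_map]
      rw [hcard]
      exact hQ c hc
    · apply Subtype.ext
      apply Finpartition.ext
      show (Q.parts.image pre).image (Finset.map g) = Q.parts
      rw [Finset.image_image]
      calc Q.parts.image (Finset.map g ∘ pre) = Q.parts.image id := by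
            apply Finset.image_congr
            intro b hb
            exact key b hb
        _ = Q.parts := Finset.image_id

lemma card_finpartition_finset {n : ℕ} (s : Finset (Fin n)) (m : ℕ) (hm : s.card = m)
    (p : ℕ → Prop) :
    Nat.card {P : Finpartition s // ∀ b ∈ P.parts, p b.card}
      = Nat.card {P : Finpartition (Finset.univ : Finset (Fin m)) // ∀ b ∈ P.parts, p b.card} := by
  classical
  have h : (Finset.univ : Finset (Fin m)).map (s.orderEmbOfFin hm).toEmbedding = s := by
    ext x
    simp only [Finset.mem_map, Finset.mem_univ, true_and]
    constructor
    · rintro ⟨y, rfl⟩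
      have : (s.orderEmbOfFin hm) y ∈ Set.range (s.orderEmbOfFin hm) := ⟨y, rfl⟩
      rwa [s.range_orderEmbOfFin hm] at this
    · intro hx
      have : x ∈ Set.range (s.orderEmbOfFin hm) := by rwa [s.range_orderEmbOfFin hm]
      obtain ⟨y, hy⟩ := this
      exact ⟨y, hy⟩
  rw [← h, card_finpartition_map]

lemma restrictedBell_zero (m : ℕ) : restrictedBell 0 m = 1 := by
  have hparts : ∀ P : Finpartition (Finset.univ : Finset (Fin 0)), P.parts = ∅ := fun P =>
    Finpartition.parts_eq_empty_iff.2 (by simp)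
  rw [restrictedBell, Nat.card_eq_one_iff_unique]
  refine ⟨⟨fun a b => Subtype.ext (Finpartition.ext (((hparts _).trans (hparts _).symm)))⟩,
    ⟨⟨(Finpartition.empty _).copy (by simp), fun b hb => by simp [hparts] at hb⟩⟩⟩

section Split

variable (n k : ℕ)

lemma bigsup_eq (hk : 2 ≤ k) (P : Finpartition (Finset.univ : Finset (Fin n)))
    {s : Finset (Fin n)} (hP : (P.parts.filter fun b => b.card ≤ k - 1).sup id = s) :
    (P.parts.filter fun b => ¬ b.card ≤ k - 1).sup id = sᶜ := by
  subst hP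
  have hdisj : Disjoint ((P.parts.filter fun b => b.card ≤ k - 1).sup id)
      ((P.parts.filter fun b => ¬ b.card ≤ k - 1).sup id) := by
    rw [Finset.disjoint_sup_left]
    intro a ha
    rw [Finset.disjoint_sup_right]
    intro b hb
    rw [Finset.mem_filter] at ha hb
    exact P.disjoint ha.1 hb.1 (fun h => hb.2 (h ▸ ha.2))
  have hcod : ((P.parts.filter fun b => b.card ≤ k - 1).sup id)
      ⊔ ((P.parts.filter fun b => ¬ b.card ≤ k - 1).sup id) = ⊤ := by
    rw [← Finset.sup_union, Finset.filter_union_filter_not_eq, P.sup_parts, Finset.top_eq_univ]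
  exact (IsCompl.symm ⟨hdisj, codisjoint_iff.2 hcod⟩).eq_compl

def fiberEquiv (hk : 2 ≤ k) (s : Finset (Fin n)) :
    {P : Finpartition (Finset.univ : Finset (Fin n)) //
        (P.parts.filter fun b => b.card ≤ k - 1).sup id = s}
      ≃ {P : Finpartition s // ∀ b ∈ P.parts, b.card ≤ k - 1} ×
        {Q : Finpartition sᶜ // ∀ b ∈ Q.parts, k ≤ b.card} where
  toFun x :=
    (⟨x.1.ofSubset (Finset.filter_subset _ _) x.2, fun b hb => (Finset.mem_filter.1 hb).2⟩,
     ⟨x.1.ofSubset (Finset.filter_subset _ _) (bigsup_eq n k hk x.1 x.2), fun b hb => by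
        have := (Finset.mem_filter.1 hb).2; omega⟩)
  invFun x :=
    ⟨(x.1.1.disjUnionAux x.2.1 disjoint_compl_right).copy (by rw [Finset.union_compl]), by
      show ((x.1.1.parts ∪ x.2.1.parts).filter fun b => b.card ≤ k - 1).sup id = s
      rw [Finset.filter_union, Finset.filter_true_of_mem (fun b hb => x.1.2 b hb),
        Finset.filter_false_of_mem (fun b hb => by have := x.2.2 b hb; omega),
        Finset.union_empty, x.1.1.sup_parts]⟩
  left_inv := by
    rintro ⟨P, hP⟩
    apply Subtype.ext
    apply Finpartition.ext
    exact Finset.filter_union_filter_not_eq _ _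
  right_inv := by
    rintro ⟨⟨P, hP⟩, ⟨Q, hQ⟩⟩
    have h1 : ((P.parts ∪ Q.parts).filter fun b => b.card ≤ k - 1) = P.parts := by
      rw [Finset.filter_union, Finset.filter_true_of_mem (fun b hb => hP b hb),
        Finset.filter_false_of_mem (fun b hb => by have := hQ b hb; omega), Finset.union_empty]
    have h2 : ((P.parts ∪ Q.parts).filter fun b => ¬ b.card ≤ k - 1) = Q.parts := by
      rw [Finset.filter_union, Finset.filter_false_of_mem (fun b hb => by
          have := hP b hb; simp; omega),
        Finset.filter_true_of_mem (fun b hb => by have := hQ b hb; omega), Finset.empty_union]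
    refine Prod.ext (Subtype.ext (Finpartition.ext ?_)) (Subtype.ext (Finpartition.ext ?_))
    · exact h1
    · exact h2

lemma bell_eq_sum (hk : 2 ≤ k) :
    bell n = ∑ i ∈ Finset.range (n + 1),
      n.choose i * (restrictedBell i (k - 1) * associatedBell (n - i) k) := by
  classical
  have e1 : bell n = ∑ s : Finset (Fin n),
      Nat.card {P : Finpartition (Finset.univ : Finset (Fin n)) //
        (P.parts.filter fun b => b.card ≤ k - 1).sup id = s} := by
    rw [bell, Nat.card_congr (Equiv.sigmaFiberEquiv
      (fun P : Finpartition (Finset.univ : Finset (Fin n)) =>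
        (P.parts.filter fun b => b.card ≤ k - 1).sup id)).symm,
      Nat.card_eq_fintype_card, Fintype.card_sigma]
    exact Finset.sum_congr rfl fun s _ => (Nat.card_eq_fintype_card).symm
  have e2 : ∀ s : Finset (Fin n),
      Nat.card {P : Finpartition (Finset.univ : Finset (Fin n)) //
        (P.parts.filter fun b => b.card ≤ k - 1).sup id = s}
      = restrictedBell s.card (k - 1) * associatedBell (n - s.card) k := by
    intro s
    rw [Nat.card_congr (fiberEquiv n k hk s), Nat.card_prod]
    congr 1
    · exact card_finpartition_finset s s.card rfl (fun c => c ≤ k - 1)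
    · exact card_finpartition_finset sᶜ (n - s.card)
        (by rw [Finset.card_compl, Fintype.card_fin]) (fun c => k ≤ c)
  rw [e1, Finset.sum_congr rfl fun s _ => e2 s]
  rw [← Finset.powerset_univ, Finset.sum_powerset_apply_card
    (fun i => restrictedBell i (k - 1) * associatedBell (n - i) k)]
  simp [Finset.card_fin]

end Split

/-- `B_{n,≥k} = B_n - ∑_{i=1}^{n} C(n,i) · B_{i,≤k-1} · B_{n-i,≥k}` for `k ≥ 2`. -/
theorem associatedBell_eq_bell_sub_sum (n k : ℕ) (hk : 2 ≤ k) :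
    (associatedBell n k : ℤ) =
      (bell n : ℤ) -
        ∑ i ∈ Finset.Icc 1 n,
          (n.choose i : ℤ) * restrictedBell i (k - 1) * associatedBell (n - i) k := by
  have h := bell_eq_sum n k hk
  have hz : (bell n : ℤ) = ∑ i ∈ Finset.range (n + 1),
      (n.choose i : ℤ) * ((restrictedBell i (k - 1) : ℤ) * (associatedBell (n - i) k : ℤ)) := by
    exact_mod_cast congrArg (Nat.cast : ℕ → ℤ) h
  have hsplit : Finset.range (n + 1) = insert 0 (Finset.Icc 1 n) := by
    ext x; simp; omega
  rw [hsplit, Finset.sum_insert (by simp)] at hz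
  rw [restrictedBell_zero] at hz
  simp only [Nat.choose_zero_right, Nat.cast_one, Nat.sub_zero, one_mul] at hz
  have hterms : ∑ i ∈ Finset.Icc 1 n,
      (n.choose i : ℤ) * (restrictedBell i (k - 1)) * (associatedBell (n - i) k)
      = ∑ i ∈ Finset.Icc 1 n,
      (n.choose i : ℤ) * ((restrictedBell i (k - 1) : ℤ) * (associatedBell (n - i) k : ℤ)) :=
    Finset.sum_congr rfl fun i _ => by ring
  rw [hterms, hz]
  ring
end
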